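/- arXiv:2509.14021 — 4 statements merged into one kernel-verified Lean document; each statement's English description precedes it below -/
import Mathlib

section
/- Let X be a real random variable with finite differential entropy, Z a standard Gaussian independent of X, and t₀ > 0 with h(X + √t₀ Z) < ∞. Then the conditional differential entropies h(X + √t₀ Z | |X| ≤ n) converge to h(X + √t₀ Z) as n → ∞. -/
open MeasureTheory ProbabilityTheory Real
open scoped ENNReal NNReal Classical

/-- Differential entropy of a density `f`: `-∫ f log f`, as an extended real.
If neither part is finite, the convention `⊤ - ⊤ = ⊥` applies, matching the
convention that the entropy is `-∞` when the integral does not exist. -/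
noncomputable def dEntFun (f : ℝ → ℝ) : EReal :=
  ((∫⁻ x, ENNReal.ofReal (-(f x * Real.log (f x)))) : ℝ≥0∞)
    - ((∫⁻ x, ENNReal.ofReal (f x * Real.log (f x))) : ℝ≥0∞)

/-- `f` is a density of the real random variable `X` under `P`. -/
def IsDensityOf {Ω : Type*} [MeasurableSpace Ω] (P : Measure Ω) (X : Ω → ℝ) (f : ℝ → ℝ) :
    Prop :=
  Measurable f ∧ (∀ x, 0 ≤ f x) ∧
    Measure.map X P = volume.withDensity fun x => ENNReal.ofReal (f x)

/-- Differential entropy of `X` under `P`; `⊥` if `X` has no density. -/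
noncomputable def dEnt {Ω : Type*} [MeasurableSpace Ω] (P : Measure Ω) (X : Ω → ℝ) : EReal :=
  if h : ∃ f, IsDensityOf P X f then dEntFun h.choose else ⊥

/-- The differential entropy exists and is finite. -/
def FinEnt {Ω : Type*} [MeasurableSpace Ω] (P : Measure Ω) (X : Ω → ℝ) : Prop :=
  dEnt P X ≠ ⊤ ∧ dEnt P X ≠ ⊥

/-!
Conditioning on `|X| ≤ n` replaces the law `μ` of `X` by `μ[|Bₙ]`, `Bₙ = {|x| ≤ n}`, so
`X + √t₀ Z` has the Gaussian-mixture density `fₙ y = ∫ φ_{x,t₀}(y) dμ[|Bₙ](x)` instead of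
`f y = ∫ φ_{x,t₀}(y) dμ(x)`, where `φ_{x,t}` is the density of `𝓝(x, t)`. As `μ Bₙ → 1`,
`fₙ → f` pointwise and eventually `0 ≤ fₙ ≤ 2 f`.
Since `f ≤ (2πt₀)^(-1/2)`, the negative part of `∫ -f log f` is finite, so `h(X + √t₀ Z) < ∞`
makes `f log f` integrable. The inequality `|s log s| ≤ K |F log F| + (1 + K log K) F` for
`0 ≤ s ≤ K F` then provides an integrable majorant, and dominated convergence concludes.
-/

open Filter Topology

section Analysis

variable {α : Type*} [MeasurableSpace α] {μ : Measure α}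

lemma abs_negMulLog_le_of_le_mul {s F K : ℝ} (hK : 1 ≤ K) (hs : 0 ≤ s) (hsF : s ≤ K * F) :
    |negMulLog s| ≤ K * |negMulLog F| + (1 + K * log K) * F := by
  have hF : 0 ≤ F := nonneg_of_mul_nonneg_right (hs.trans hsF) (by linarith)
  have hlogK : 0 ≤ log K := log_nonneg hK
  rcases hs.eq_or_lt with rfl | hs
  · simp only [negMulLog_zero, abs_zero]; positivity
  have hFpos : 0 < F := pos_of_mul_pos_right (hs.trans_le hsF) (by linarith)
  -- `s log F` is controlled by `F log F`, and Gibbs' inequality puts `s log (s / F)` in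
  -- `[-F, K log K · F]`.
  have hsplit : negMulLog s = -(s * log F) - s * log (s / F) := by
    rw [negMulLog, log_div hs.ne' hFpos.ne']; ring
  have h1 : |s * log F| ≤ K * |negMulLog F| := by
    rw [negMulLog, abs_mul, abs_mul, abs_of_pos hs, abs_neg, abs_of_pos hFpos]
    nlinarith [abs_nonneg (log F)]
  have h2 : s * log (s / F) ≤ K * log K * F := by
    have : log (s / F) ≤ log K := log_le_log (by positivity) ((div_le_iff₀ hFpos).2 hsF)
    nlinarith
  have h3 : -F ≤ s * log (s / F) := by
    have := one_sub_inv_le_log_of_pos (div_pos hs hFpos)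
    rw [inv_div] at this
    have : s * (1 - F / s) = s - F := by field_simp
    nlinarith
  rw [hsplit, abs_le]
  constructor <;> nlinarith [abs_le.1 h1]

lemma integrable_negMulLog_of_le_mul {f F : α → ℝ} {K : ℝ} (hK : 1 ≤ K) (hF : Integrable F μ)
    (hFlog : Integrable (fun x => negMulLog (F x)) μ) (hf : AEStronglyMeasurable f μ)
    (hfF : ∀ᵐ x ∂μ, 0 ≤ f x ∧ f x ≤ K * F x) :
    Integrable (fun x => negMulLog (f x)) μ :=
  ((hFlog.abs.const_mul K).add (hF.const_mul (1 + K * log K))).mono'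
    (continuous_negMulLog.comp_aestronglyMeasurable hf)
    (hfF.mono fun _ hx => abs_negMulLog_le_of_le_mul hK hx.1 hx.2)

lemma tendsto_integral_negMulLog_of_le_mul {ι : Type*} {l : Filter ι} [l.IsCountablyGenerated]
    {f : ι → α → ℝ} {F : α → ℝ} {K : ℝ} (hK : 1 ≤ K) (hF : Integrable F μ)
    (hFlog : Integrable (fun x => negMulLog (F x)) μ) (hf : ∀ i, AEStronglyMeasurable (f i) μ)
    (hfF : ∀ᶠ i in l, ∀ᵐ x ∂μ, 0 ≤ f i x ∧ f i x ≤ K * F x)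
    (hlim : ∀ᵐ x ∂μ, Tendsto (fun i => f i x) l (𝓝 (F x))) :
    Tendsto (fun i => ∫ x, negMulLog (f i x) ∂μ) l (𝓝 (∫ x, negMulLog (F x) ∂μ)) :=
  tendsto_integral_filter_of_dominated_convergence _
    (.of_forall fun i => continuous_negMulLog.comp_aestronglyMeasurable (hf i))
    (hfF.mono fun _ hi => hi.mono fun _ hx => abs_negMulLog_le_of_le_mul hK hx.1 hx.2)
    ((hFlog.abs.const_mul K).add (hF.const_mul (1 + K * log K)))
    (hlim.mono fun _ hx => (continuous_negMulLog.tendsto _).comp hx)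

end Analysis

lemma integrable_of_lintegral_ofReal_ne_top {α : Type*} [MeasurableSpace α] {μ : Measure α}
    {g : α → ℝ} (hg : AEStronglyMeasurable g μ) (hpos : ∫⁻ x, ENNReal.ofReal (g x) ∂μ ≠ ∞)
    (hneg : ∫⁻ x, ENNReal.ofReal (-g x) ∂μ ≠ ∞) : Integrable g μ := by
  have hmax : ∀ g : α → ℝ, AEStronglyMeasurable g μ → ∫⁻ x, ENNReal.ofReal (g x) ∂μ ≠ ∞ →
      Integrable (fun x => max (g x) 0) μ := fun g hg h =>
    (lintegral_ofReal_ne_top_iff_integrable (by fun_prop) (ae_of_all _ fun _ => le_max_right _ _)).1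
      (by simpa [ENNReal.ofReal_max] using h)
  exact ((hmax g hg hpos).sub (hmax (fun x => -g x) hg.neg hneg)).congr
    (ae_of_all _ fun x => max_zero_sub_max_neg_zero_eq_self (g x))

lemma dEntFun_eq_lintegral_sub (f : ℝ → ℝ) :
    dEntFun f = ((∫⁻ x, ENNReal.ofReal (negMulLog (f x)) : ℝ≥0∞) : EReal)
      - ((∫⁻ x, ENNReal.ofReal (-negMulLog (f x)) : ℝ≥0∞) : EReal) := by
  simp only [dEntFun, negMulLog_eq_neg, neg_neg]

lemma dEntFun_eq_integral {f : ℝ → ℝ} (hf : Integrable (fun x => negMulLog (f x))) :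
    dEntFun f = ((∫ x, negMulLog (f x) : ℝ) : EReal) := by
  rw [integral_eq_lintegral_pos_part_sub_lintegral_neg_part hf, EReal.coe_sub,
    EReal.coe_ennreal_toReal hf.lintegral_lt_top.ne,
    EReal.coe_ennreal_toReal (by simpa using hf.neg.lintegral_lt_top.ne),
    dEntFun_eq_lintegral_sub]

lemma tendsto_dEntFun_of_le_mul {ι : Type*} {l : Filter ι} [l.IsCountablyGenerated]
    {f : ι → ℝ → ℝ} {F : ℝ → ℝ} {K : ℝ} (hK : 1 ≤ K) (hF : Integrable F)
    (hFlog : Integrable (fun x => negMulLog (F x))) (hf : ∀ i, AEStronglyMeasurable (f i))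
    (hfF : ∀ᶠ i in l, ∀ᵐ x, 0 ≤ f i x ∧ f i x ≤ K * F x)
    (hlim : ∀ᵐ x, Tendsto (fun i => f i x) l (𝓝 (F x))) :
    Tendsto (fun i => dEntFun (f i)) l (𝓝 (dEntFun F)) := by
  rw [dEntFun_eq_integral hFlog]
  refine (EReal.tendsto_coe.2
    (tendsto_integral_negMulLog_of_le_mul hK hF hFlog hf hfF hlim)).congr' ?_
  filter_upwards [hfF] with i hi
  exact (dEntFun_eq_integral (integrable_negMulLog_of_le_mul hK hF hFlog (hf i) hi)).symm

lemma integrable_negMulLog_of_dEntFun_ne_top {f : ℝ → ℝ} {M : ℝ} (hf : Measurable f)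
    (hf0 : ∀ x, 0 ≤ f x) (hfM : ∀ x, f x ≤ M) (hfi : Integrable f) (hent : dEntFun f ≠ ⊤) :
    Integrable (fun x => negMulLog (f x)) := by
  have hneg : ∀ x, -negMulLog (f x) ≤ M * f x := by
    intro x
    rcases (hf0 x).eq_or_lt with h | h
    · simp [← h]
    · rw [negMulLog, neg_mul, neg_neg, mul_comm M]
      exact mul_le_mul_of_nonneg_left
        ((log_le_sub_one_of_pos h).trans (by linarith [hfM x])) h.le
  have hneg_fin : ∫⁻ x, ENNReal.ofReal (-negMulLog (f x)) ≠ ∞ :=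
    ne_top_of_le_ne_top (hfi.const_mul M).lintegral_lt_top.ne
      (lintegral_mono fun x => ENNReal.ofReal_le_ofReal (hneg x))
  refine integrable_of_lintegral_ofReal_ne_top
    (continuous_negMulLog.measurable.comp hf).aestronglyMeasurable ?_ hneg_fin
  intro htop
  rw [dEntFun_eq_lintegral_sub, htop, ← EReal.coe_ennreal_toReal hneg_fin] at hent
  exact hent (EReal.top_sub_coe _)

lemma dEnt_eq_dEntFun {Ω : Type*} [MeasurableSpace Ω] {P : Measure Ω} {Y : Ω → ℝ}
    {f : ℝ → ℝ} (hf : IsDensityOf P Y f) : dEnt P Y = dEntFun f := by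
  have hex : ∃ g, IsDensityOf P Y g := ⟨f, hf⟩
  obtain ⟨hgm, hg0, hgY⟩ := hex.choose_spec
  obtain ⟨hfm, hf0, hfY⟩ := hf
  have hae : (fun x => ENNReal.ofReal (hex.choose x)) =ᵐ[volume] fun x => ENNReal.ofReal (f x) := by
    rw [← withDensity_eq_iff_of_sigmaFinite hgm.ennreal_ofReal.aemeasurable
      hfm.ennreal_ofReal.aemeasurable, ← hgY, ← hfY]
  have hae' : hex.choose =ᵐ[volume] f := hae.mono fun x hx =>
    (ENNReal.ofReal_eq_ofReal_iff (hg0 x) (hf0 x)).1 hx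
  rw [dEnt, dif_pos hex]
  unfold dEntFun
  congr 2 <;> exact lintegral_congr_ae (hae'.mono fun x hx => by simp only [hx])

lemma IsDensityOf.integrable {Ω : Type*} [MeasurableSpace Ω] {P : Measure Ω} [IsFiniteMeasure P]
    {Y : Ω → ℝ} {f : ℝ → ℝ} (hf : IsDensityOf P Y f) : Integrable f := by
  refine (lintegral_ofReal_ne_top_iff_integrable hf.1.aestronglyMeasurable
    (ae_of_all _ hf.2.1)).1 ?_
  rw [← setLIntegral_univ, ← withDensity_apply _ MeasurableSet.univ, ← hf.2.2]
  exact measure_ne_top _ _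

lemma map_add_prod_gaussianReal (ρ : Measure ℝ) [SFinite ρ] {v : ℝ≥0} (hv : v ≠ 0) :
    (ρ.prod (gaussianReal 0 v)).map (fun p => p.1 + p.2)
      = volume.withDensity fun y => ∫⁻ x, gaussianPDF x v y ∂ρ := by
  ext s hs
  have hmeas : Measurable (Function.uncurry fun x y => gaussianPDF x v y) :=
    measurable_uncurry_gaussianPDF.comp
      (measurable_fst.prodMk (measurable_const.prodMk measurable_snd))
  rw [Measure.map_apply measurable_add hs, Measure.prod_apply (measurable_add hs),
    withDensity_apply _ hs, ← lintegral_lintegral_swap hmeas.aemeasurable]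
  refine lintegral_congr fun x => ?_
  change gaussianReal 0 v ((x + ·) ⁻¹' s) = _
  rw [← Measure.map_apply (measurable_const_add x) hs, gaussianReal_map_const_add, zero_add,
    gaussianReal_apply _ hv]

lemma gaussianPDF_le (μ : ℝ) (v : ℝ≥0) (x : ℝ) :
    gaussianPDF μ v x ≤ ENNReal.ofReal (√(2 * π * v))⁻¹ := by
  rw [gaussianPDF, gaussianPDFReal_def]
  refine ENNReal.ofReal_le_ofReal (mul_le_of_le_one_right (by positivity) (exp_le_one_iff.2 ?_))
  exact div_nonpos_of_nonpos_of_nonneg (neg_nonpos.2 (sq_nonneg _)) (by positivity)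

noncomputable def gaussianConvPDFReal (ρ : Measure ℝ) (v : ℝ≥0) (y : ℝ) : ℝ :=
  (∫⁻ x, gaussianPDF x v y ∂ρ).toReal

section GaussianConv

variable (ρ : Measure ℝ) (v : ℝ≥0)

lemma lintegral_gaussianPDF_le (y : ℝ) :
    ∫⁻ x, gaussianPDF x v y ∂ρ ≤ ENNReal.ofReal (√(2 * π * v))⁻¹ * ρ Set.univ :=
  (lintegral_mono fun x => gaussianPDF_le x v y).trans_eq (lintegral_const _)

lemma measurable_gaussianConvPDFReal [SFinite ρ] : Measurable (gaussianConvPDFReal ρ v) :=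
  (Measurable.lintegral_prod_left' (measurable_uncurry_gaussianPDF.comp
    (measurable_fst.prodMk (measurable_const.prodMk measurable_snd)))).ennreal_toReal

variable [IsFiniteMeasure ρ]

lemma lintegral_gaussianPDF_ne_top (y : ℝ) : ∫⁻ x, gaussianPDF x v y ∂ρ ≠ ∞ :=
  ne_top_of_le_ne_top (ENNReal.mul_ne_top ENNReal.ofReal_ne_top (measure_ne_top _ _))
    (lintegral_gaussianPDF_le ρ v y)

lemma ofReal_gaussianConvPDFReal (y : ℝ) :
    ENNReal.ofReal (gaussianConvPDFReal ρ v y) = ∫⁻ x, gaussianPDF x v y ∂ρ :=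
  ENNReal.ofReal_toReal (lintegral_gaussianPDF_ne_top ρ v y)

lemma gaussianConvPDFReal_le (y : ℝ) :
    gaussianConvPDFReal ρ v y ≤ (√(2 * π * v))⁻¹ * (ρ Set.univ).toReal := by
  refine (ENNReal.toReal_mono (ENNReal.mul_ne_top ENNReal.ofReal_ne_top (measure_ne_top _ _))
    (lintegral_gaussianPDF_le ρ v y)).trans_eq ?_
  rw [ENNReal.toReal_mul, ENNReal.toReal_ofReal (by positivity)]

lemma gaussianConvPDFReal_cond_le (s : Set ℝ) (y : ℝ) :
    gaussianConvPDFReal (ρ[|s]) v y ≤ (ρ s).toReal⁻¹ * gaussianConvPDFReal ρ v y := by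
  rw [gaussianConvPDFReal, ProbabilityTheory.cond, lintegral_smul_measure, smul_eq_mul,
    ENNReal.toReal_mul, ENNReal.toReal_inv]
  exact mul_le_mul_of_nonneg_left (ENNReal.toReal_mono (lintegral_gaussianPDF_ne_top ρ v y)
    (setLIntegral_le_lintegral _ _)) (by positivity)

end GaussianConv

lemma tendsto_lintegral_cond {α ι : Type*} [MeasurableSpace α] {μ : Measure α}
    [IsProbabilityMeasure μ] {f : α → ℝ≥0∞} (hf : ∫⁻ x, f x ∂μ ≠ ∞) {l : Filter ι}
    {s : ι → Set α} (hs : ∀ i, MeasurableSet (s i)) (hμs : Tendsto (fun i => μ (s i)) l (𝓝 1)) :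
    Tendsto (fun i => ∫⁻ x, f x ∂μ[|s i]) l (𝓝 (∫⁻ x, f x ∂μ)) := by
  have hcompl : Tendsto (fun i => μ (s i)ᶜ) l (𝓝 0) := by
    simp_rw [prob_compl_eq_one_sub (hs _)]
    simpa using ENNReal.Tendsto.sub tendsto_const_nhds hμs (Or.inl ENNReal.one_ne_top)
  have hrestrict : Tendsto (fun i => ∫⁻ x in s i, f x ∂μ) l (𝓝 (∫⁻ x, f x ∂μ)) := by
    have := ENNReal.Tendsto.sub tendsto_const_nhds (tendsto_setLIntegral_zero hf hcompl)
      (Or.inl hf)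
    refine (by simpa using this : Tendsto _ l _).congr fun i => ?_
    rw [← lintegral_add_compl f (hs i), ENNReal.add_sub_cancel_right
      (ne_top_of_le_ne_top hf (setLIntegral_le_lintegral _ _))]
  have hinv : Tendsto (fun i => (μ (s i))⁻¹) l (𝓝 1) := by
    simpa using tendsto_inv_iff.2 hμs
  simpa [ProbabilityTheory.cond, lintegral_smul_measure] using
    ENNReal.Tendsto.mul hinv (Or.inl one_ne_zero) hrestrict (Or.inr ENNReal.one_ne_top)

lemma tendsto_gaussianConvPDFReal_cond {ι : Type*} {ρ : Measure ℝ} [IsProbabilityMeasure ρ]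
    (v : ℝ≥0) {l : Filter ι} {s : ι → Set ℝ} (hs : ∀ i, MeasurableSet (s i))
    (hρs : Tendsto (fun i => ρ (s i)) l (𝓝 1)) (y : ℝ) :
    Tendsto (fun i => gaussianConvPDFReal (ρ[|s i]) v y) l (𝓝 (gaussianConvPDFReal ρ v y)) :=
  (ENNReal.tendsto_toReal (lintegral_gaussianPDF_ne_top ρ v y)).comp
    (tendsto_lintegral_cond (lintegral_gaussianPDF_ne_top ρ v y) hs hρs)

lemma map_prodMk_cond_preimage {Ω α β : Type*} [MeasurableSpace Ω] [MeasurableSpace α]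
    [MeasurableSpace β] {P : Measure Ω} {X : Ω → α} {Z : Ω → β} (hX : Measurable X)
    (hZ : Measurable Z) [IsFiniteMeasure P] {ν : Measure β} [SFinite ν]
    (hXZ : P.map (fun ω => (X ω, Z ω)) = (P.map X).prod ν) {B : Set α} (hB : MeasurableSet B) :
    (P[|X ⁻¹' B]).map (fun ω => (X ω, Z ω)) = ((P.map X)[|B]).prod ν := by
  have hpre : X ⁻¹' B = (fun ω => (X ω, Z ω)) ⁻¹' (B ×ˢ Set.univ) := by ext; simp
  rw [ProbabilityTheory.cond, ProbabilityTheory.cond, Measure.map_smul, hpre,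
    ← Measure.restrict_map (hX.prodMk hZ) (hB.prod MeasurableSet.univ), hXZ,
    ← Measure.restrict_prod_eq_prod_univ, Measure.prod_smul_left, ← hpre,
    Measure.map_apply hX hB]

lemma isDensityOf_add_sqrt_mul {Ω : Type*} [MeasurableSpace Ω] {Q : Measure Ω} {X Z : Ω → ℝ}
    (hX : Measurable X) (hZ : Measurable Z) {ρ : Measure ℝ} [IsFiniteMeasure ρ]
    (hXZ : Q.map (fun ω => (X ω, Z ω)) = ρ.prod (gaussianReal 0 1)) {t : ℝ} (ht : 0 < t) :
    IsDensityOf Q (fun ω => X ω + √t * Z ω) (gaussianConvPDFReal ρ t.toNNReal) := by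
  refine ⟨measurable_gaussianConvPDFReal _ _, fun _ => ENNReal.toReal_nonneg, ?_⟩
  have hscale : Measurable (Prod.map (id : ℝ → ℝ) (√t * ·)) :=
    measurable_id.prodMap (measurable_const_mul _)
  have hvar : (.mk (√t ^ 2) (sq_nonneg _) * 1 : ℝ≥0) = t.toNNReal := by
    rw [mul_one]
    ext
    simp [sq_sqrt ht.le, ht.le]
  have hcomp : (fun ω => X ω + √t * Z ω)
      = ((fun p : ℝ × ℝ => p.1 + p.2) ∘ Prod.map id (√t * ·)) ∘ fun ω => (X ω, Z ω) := rfl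
  simp_rw [ofReal_gaussianConvPDFReal]
  rw [hcomp, ← Measure.map_map (measurable_add.comp hscale) (hX.prodMk hZ),
    ← Measure.map_map measurable_add hscale, hXZ,
    ← Measure.map_prod_map _ _ measurable_id (measurable_const_mul _), Measure.map_id,
    gaussianReal_map_const_mul, mul_zero, hvar,
    map_add_prod_gaussianReal ρ (by simpa using ht)]

lemma tendsto_measure_abs_le_atTop (μ : Measure ℝ) :
    Tendsto (fun n : ℕ => μ {x | |x| ≤ n}) atTop (𝓝 (μ Set.univ)) := by
  have hunion : (⋃ n : ℕ, {x : ℝ | |x| ≤ n}) = Set.univ :=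
    Set.eq_univ_of_forall fun x => Set.mem_iUnion.2 (exists_nat_ge |x|)
  rw [← hunion]
  exact tendsto_measure_iUnion_atTop fun m n hmn x (hx : |x| ≤ m) =>
    hx.trans (Nat.cast_le.2 hmn)

theorem truncation_entropy_convergence_general {Ω : Type*} [MeasurableSpace Ω] (P : Measure Ω)
    [IsProbabilityMeasure P] (X Z : Ω → ℝ) (hX : Measurable X) (hZ : Measurable Z)
    (hindep : IndepFun X Z P) (hgauss : Measure.map Z P = gaussianReal 0 1)
    (t₀ : ℝ) (ht₀ : 0 < t₀)
    (hfin : dEnt P (fun ω => X ω + Real.sqrt t₀ * Z ω) ≠ ⊤) :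
    Filter.Tendsto
      (fun n : ℕ => dEnt (P[|{ω | |X ω| ≤ (n : ℝ)}]) (fun ω => X ω + Real.sqrt t₀ * Z ω))
      Filter.atTop (nhds (dEnt P (fun ω => X ω + Real.sqrt t₀ * Z ω))) := by
  set μ := P.map X
  have : IsProbabilityMeasure μ := Measure.isProbabilityMeasure_map hX.aemeasurable
  set B : ℕ → Set ℝ := fun n => {x | |x| ≤ n}
  have hB (n : ℕ) : MeasurableSet (B n) := measurableSet_le measurable_abs measurable_const
  have hXZ : P.map (fun ω => (X ω, Z ω)) = μ.prod (gaussianReal 0 1) := by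
    rw [← hgauss]
    exact (indepFun_iff_map_prod_eq_prod_map_map hX.aemeasurable hZ.aemeasurable).1 hindep
  have hdens := isDensityOf_add_sqrt_mul hX hZ hXZ ht₀
  have hent_cond : (fun n : ℕ => dEnt (P[|{ω | |X ω| ≤ (n : ℝ)}]) (fun ω => X ω + √t₀ * Z ω))
      = fun n => dEntFun (gaussianConvPDFReal (μ[|B n]) t₀.toNNReal) := funext fun n =>
    dEnt_eq_dEntFun (isDensityOf_add_sqrt_mul hX hZ (map_prodMk_cond_preimage hX hZ hXZ (hB n)) ht₀)
  have hμB : Tendsto (fun n => μ (B n)) atTop (𝓝 1) := by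
    rw [← measure_univ (μ := μ)]
    exact tendsto_measure_abs_le_atTop μ
  have hμB_inv : ∀ᶠ n in atTop, (μ (B n)).toReal⁻¹ ≤ 2 := by
    have := ((ENNReal.tendsto_toReal ENNReal.one_ne_top).comp hμB).inv₀ (by simp)
    exact (this.eventually (gt_mem_nhds (by norm_num))).mono fun _ h => h.le
  rw [dEnt_eq_dEntFun hdens] at hfin ⊢
  rw [hent_cond]
  refine tendsto_dEntFun_of_le_mul one_le_two hdens.integrable
    (integrable_negMulLog_of_dEntFun_ne_top (measurable_gaussianConvPDFReal _ _)
      (fun _ => ENNReal.toReal_nonneg) (gaussianConvPDFReal_le μ _) hdens.integrable hfin)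
    (fun n => (measurable_gaussianConvPDFReal _ _).aestronglyMeasurable) ?_
    (ae_of_all _ (tendsto_gaussianConvPDFReal_cond _ hB hμB))
  filter_upwards [hμB_inv] with n hn
  exact ae_of_all _ fun y => ⟨ENNReal.toReal_nonneg, (gaussianConvPDFReal_cond_le μ _ _ y).trans
    (mul_le_mul_of_nonneg_right hn ENNReal.toReal_nonneg)⟩

/-- Convergence of the conditional entropies `h(X + √t₀ Z | |X| ≤ n)` to
`h(X + √t₀ Z)` as `n → ∞`. -/
theorem truncation_entropy_convergence {Ω : Type*} [MeasurableSpace Ω] (P : Measure Ω)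
    [IsProbabilityMeasure P] (X Z : Ω → ℝ) (hX : Measurable X) (hZ : Measurable Z)
    (hindep : IndepFun X Z P) (hgauss : Measure.map Z P = gaussianReal 0 1)
    (hXfin : FinEnt P X) (t₀ : ℝ) (ht₀ : 0 < t₀)
    (hfin : dEnt P (fun ω => X ω + Real.sqrt t₀ * Z ω) ≠ ⊤) :
    Filter.Tendsto
      (fun n : ℕ => dEnt (P[|{ω | |X ω| ≤ (n : ℝ)}]) (fun ω => X ω + Real.sqrt t₀ * Z ω))
      Filter.atTop (nhds (dEnt P (fun ω => X ω + Real.sqrt t₀ * Z ω))) :=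
  truncation_entropy_convergence_general P X Z hX hZ hindep hgauss t₀ ht₀ hfin
end

section
/- For any real random variable X and 0 < a < t₀, the relative entropy (Kullback–Leibler divergence) between the laws of X + √t₀ Z and X + √a Z is at most the relative entropy between N(0,t₀) and N(0,a), which is finite; here Z ~ N(0,1) is independent of X. -/
open MeasureTheory ProbabilityTheory Real
open scoped ENNReal NNReal Classical

/-- Relative entropy (Kullback–Leibler divergence) between measures on `ℝ`. -/
noncomputable def relEnt (P Q : Measure ℝ) : EReal :=
  if P ≪ Q ∧ Integrable (fun x => Real.log (P.rnDeriv Q x).toReal) P then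
    ((∫ x, Real.log (P.rnDeriv Q x).toReal ∂P : ℝ) : EReal)
  else ⊤

/-!
If `μ` is the law of `X`, independence makes `X + √s Z` distributed as `μ ∗ N(0, s)`. Convolving
two laws with the same probability measure `μ` is the image under addition of their products with
`μ`; by the chain rule the product with a common factor leaves the Kullback–Leibler divergence
unchanged, and by the data processing inequality the image under addition can only decrease it.
The Gaussian divergence is finite because the log-likelihood ratio of two Gaussians is a quadratic
polynomial, which has finite Gaussian moments.
-/

open InformationTheory

/-- `klDiv` carries the correction `ν.real univ - μ.real univ`, which vanishes here. -/
lemma relEnt_eq_klDiv (P Q : Measure ℝ) [IsProbabilityMeasure P] [IsProbabilityMeasure Q] :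
    relEnt P Q = klDiv P Q := by
  unfold relEnt
  split_ifs with h
  · rw [klDiv_of_ac_of_integrable h.1 h.2, EReal.coe_ennreal_ofReal, probReal_univ,
      probReal_univ, add_sub_cancel_right, max_eq_left]
    · rfl
    simpa using integral_llr_add_sub_measure_univ_nonneg h.1 h.2
  · rw [klDiv_eq_top_iff.2 fun hac hi => h ⟨hac, hi⟩, EReal.coe_ennreal_top]

lemma log_gaussianPDFReal (μ : ℝ) {v : ℝ≥0} (hv : v ≠ 0) (x : ℝ) :
    log (gaussianPDFReal μ v x) = -log √(2 * π * v) - (x - μ) ^ 2 / (2 * v) := by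
  rw [gaussianPDFReal, log_mul (by positivity) (exp_pos _).ne', log_inv, log_exp]
  ring

lemma integrable_log_gaussianPDFReal (μ : ℝ) {v : ℝ≥0} (hv : v ≠ 0) (μ' : ℝ) (v' : ℝ≥0) :
    Integrable (fun x => log (gaussianPDFReal μ v x)) (gaussianReal μ' v') := by
  simp_rw [log_gaussianPDFReal μ hv]
  have hsq : Integrable (fun x => (x - μ) ^ 2) (gaussianReal μ' v') :=
    ((memLp_id_gaussianReal 2).sub (memLp_const μ)).integrable_sq
  exact (integrable_const _).sub (hsq.div_const _)

lemma llr_gaussianReal_ae_eq {μ₁ μ₂ : ℝ} {v₁ v₂ : ℝ≥0} (hv₁ : v₁ ≠ 0) (hv₂ : v₂ ≠ 0) :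
    llr (gaussianReal μ₁ v₁) (gaussianReal μ₂ v₂) =ᵐ[gaussianReal μ₁ v₁]
      fun x => log (gaussianPDFReal μ₁ v₁ x) - log (gaussianPDFReal μ₂ v₂ x) := by
  have hac₁ := gaussianReal_absolutelyContinuous μ₁ hv₁
  have hac₂ := gaussianReal_absolutelyContinuous' μ₂ hv₂
  have hchain := Measure.rnDeriv_mul_rnDeriv (κ := gaussianReal μ₂ v₂) hac₁
  have hinv := Measure.inv_rnDeriv' hac₂
  -- `dN₁/dN₂ = (dN₁/dx) · (dN₂/dx)⁻¹`, with both Lebesgue densities positive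
  filter_upwards [hac₁.trans hac₂ |>.ae_le hchain.symm, hac₁.ae_le (rnDeriv_gaussianReal μ₁ v₁),
    hac₁.ae_le hinv.symm, hac₁.ae_le (rnDeriv_gaussianReal μ₂ v₂)] with x h h₁ hi h₂
  rw [llr, h, Pi.mul_apply, h₁, hi, Pi.inv_apply, h₂, ENNReal.toReal_mul, ENNReal.toReal_inv,
    gaussianPDF, gaussianPDF, ENNReal.toReal_ofReal (gaussianPDFReal_nonneg _ _ _),
    ENNReal.toReal_ofReal (gaussianPDFReal_nonneg _ _ _), log_mul, log_inv, sub_eq_add_neg]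
  · exact (gaussianPDFReal_pos _ _ _ hv₁).ne'
  · exact inv_ne_zero (gaussianPDFReal_pos _ _ _ hv₂).ne'

lemma klDiv_gaussianReal_ne_top {μ₁ μ₂ : ℝ} {v₁ v₂ : ℝ≥0} (hv₁ : v₁ ≠ 0) (hv₂ : v₂ ≠ 0) :
    klDiv (gaussianReal μ₁ v₁) (gaussianReal μ₂ v₂) ≠ ∞ :=
  klDiv_ne_top ((gaussianReal_absolutelyContinuous μ₁ hv₁).trans
      (gaussianReal_absolutelyContinuous' μ₂ hv₂))
    (((integrable_log_gaussianPDFReal μ₁ hv₁ _ _).sub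
      (integrable_log_gaussianPDFReal μ₂ hv₂ _ _)).congr (llr_gaussianReal_ae_eq hv₁ hv₂).symm)

lemma gaussianReal_map_sqrt_mul {s : ℝ} (hs : 0 ≤ s) :
    (gaussianReal 0 1).map (√s * ·) = gaussianReal 0 s.toNNReal := by
  rw [gaussianReal_map_const_mul, mul_zero, mul_one]
  congr 1
  ext
  simp [sq_sqrt hs, hs]

lemma klDiv_conv_left_le {G : Type*} [AddCommMonoid G] [MeasurableSpace G] [MeasurableAdd₂ G]
    (μ ν₁ ν₂ : Measure G) [IsProbabilityMeasure μ] [IsFiniteMeasure ν₁] [IsFiniteMeasure ν₂] :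
    klDiv (μ ∗ ν₁) (μ ∗ ν₂) ≤ klDiv ν₁ ν₂ := by
  rw [Measure.conv_comm μ, Measure.conv_comm μ, Measure.conv, Measure.conv,
    ← Measure.compProd_const, ← Measure.compProd_const]
  calc _ ≤ klDiv (ν₁ ⊗ₘ Kernel.const G μ) (ν₂ ⊗ₘ Kernel.const G μ) :=
        klDiv_map_le _ _ measurable_add
    _ = klDiv ν₁ ν₂ := klDiv_compProd_left _ _ _

lemma map_add_sqrt_mul_eq_conv {Ω : Type*} [MeasurableSpace Ω] {P : Measure Ω}
    [IsProbabilityMeasure P] {X Z : Ω → ℝ} (hX : Measurable X) (hZ : Measurable Z)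
    (hindep : IndepFun X Z P) (hgauss : P.map Z = gaussianReal 0 1) {s : ℝ} (hs : 0 ≤ s) :
    P.map (fun ω => X ω + √s * Z ω) = P.map X ∗ gaussianReal 0 s.toNNReal := by
  rw [← gaussianReal_map_sqrt_mul hs, ← hgauss, Measure.map_map (measurable_const_mul _) hZ]
  exact (hindep.comp measurable_id (measurable_const_mul _)).map_add_eq_map_conv_map hX
    (hZ.const_mul _)

/-- Data processing bound: `D(X+√t₀Z ‖ X+√aZ) ≤ D(N(0,t₀) ‖ N(0,a)) < ∞`. -/
theorem relEnt_gaussian_perturbations {Ω : Type*} [MeasurableSpace Ω] (P : Measure Ω)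
    [IsProbabilityMeasure P] (X Z : Ω → ℝ) (hX : Measurable X) (hZ : Measurable Z)
    (hindep : IndepFun X Z P) (hgauss : Measure.map Z P = gaussianReal 0 1)
    (a t₀ : ℝ) (ha : 0 < a) (hat₀ : a < t₀) :
    relEnt (Measure.map (fun ω => X ω + Real.sqrt t₀ * Z ω) P)
        (Measure.map (fun ω => X ω + Real.sqrt a * Z ω) P)
      ≤ relEnt (gaussianReal 0 t₀.toNNReal) (gaussianReal 0 a.toNNReal) ∧
    relEnt (gaussianReal 0 t₀.toNNReal) (gaussianReal 0 a.toNNReal) < ⊤ := by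
  have ht₀ : 0 < t₀ := ha.trans hat₀
  have : IsProbabilityMeasure (P.map X) := Measure.isProbabilityMeasure_map hX.aemeasurable
  rw [map_add_sqrt_mul_eq_conv hX hZ hindep hgauss ht₀.le,
    map_add_sqrt_mul_eq_conv hX hZ hindep hgauss ha.le, relEnt_eq_klDiv, relEnt_eq_klDiv]
  have hfin := klDiv_gaussianReal_ne_top (μ₁ := 0) (μ₂ := 0)
    (Real.toNNReal_pos.2 ht₀).ne' (Real.toNNReal_pos.2 ha).ne'
  exact ⟨EReal.coe_ennreal_le_coe_ennreal_iff.2 (klDiv_conv_left_le _ _ _),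
    Ne.lt_top (EReal.coe_ennreal_eq_top_iff.not.2 hfin)⟩
end

section
/- For probability densities f, g on ℝ, ∫ f(x) |log(f(x)/g(x))| dx ≤ D(f‖g) + √(2 D(f‖g)), where D(f‖g) = ∫ f log(f/g) is the relative entropy. -/
/-!
As `f ≥ 0`, `f |log (f / g)| = f log (f / g) + 2 (f log (f / g))⁻`, and `log y ≥ 1 - 1 / y` gives
`(f log (f / g))⁻ ≤ (f - g)⁻`, whose integral is `‖f - g‖₁ / 2` because `∫ f = ∫ g`. What remains
is Pinsker's inequality `‖f - g‖₁ ≤ √(2 D(f‖g))`. It follows from the pointwise bound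
`3 (t - 1)² ≤ 2 (t + 2) klFun t`, where `klFun t = t log t + 1 - t`, by Cauchy–Schwarz, used here
in the form of AM–GM with a free parameter that is then optimised.
-/

open MeasureTheory ProbabilityTheory Real
open scoped ENNReal NNReal Classical

open Set InformationTheory

lemma monotoneOn_add_one_mul_log_sub_two_mul_sub_one :
    MonotoneOn (fun x : ℝ => (x + 1) * log x - 2 * (x - 1)) (Ioi 0) := by
  refine monotoneOn_of_hasDerivWithinAt_nonneg (convex_Ioi 0) (f' := fun x => klFun x / x)
    (by fun_prop (disch := exact fun x hx => ne_of_gt hx))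
    (fun x hx => ?_) (fun x hx => ?_)
  -- the derivative `log x + 1 / x - 1` is `klFun x / x`
  · rw [interior_Ioi] at hx ⊢
    have hx : x ≠ 0 := ne_of_gt hx
    have := (((hasDerivAt_id' x).add_const 1).mul (hasDerivAt_log hx)).sub
      (((hasDerivAt_id' x).sub_const 1).const_mul 2)
    refine (this.congr_deriv ?_).hasDerivWithinAt
    simp only [klFun_apply]; field_simp; ring
  · rw [interior_Ioi] at hx
    exact div_nonneg (klFun_nonneg hx.le) hx.le

lemma three_mul_sq_sub_one_le_klFun {x : ℝ} (hx : 0 ≤ x) :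
    3 * (x - 1) ^ 2 ≤ 2 * (x + 2) * klFun x := by
  set k : ℝ → ℝ := fun x => (x + 1) * log x - 2 * (x - 1)
  set h : ℝ → ℝ := fun x => 2 * (x + 2) * klFun x - 3 * (x - 1) ^ 2
  have hk : k 1 = 0 := by simp [k]
  have hderiv : ∀ x ≠ 0, HasDerivAt h (4 * k x) x := fun x hx => by
    have := (((hasDerivAt_id' x).add_const 2).const_mul 2).mul (hasDerivAt_klFun hx) |>.sub
      ((((hasDerivAt_id' x).sub_const 1).pow 2).const_mul 3)
    refine this.congr_deriv ?_
    simp only [k, klFun_apply]; ring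
  have hcont : Continuous h := by fun_prop
  have hmin : IsMinOn h (Ici 0) 1 := by
    refine isMinOn_Ici_of_deriv hcont.continuousAt hcont.continuousAt
      (fun y hy => (hderiv y hy.1.ne').differentiableAt.differentiableWithinAt)
      (fun y hy => (hderiv y (by simp at hy; linarith)).differentiableAt.differentiableWithinAt)
      (fun y hy => ?_) (fun y hy => ?_)
    · rw [(hderiv y hy.1.ne').deriv, ← hk]
      have := monotoneOn_add_one_mul_log_sub_two_mul_sub_one hy.1 (mem_Ioi.2 one_pos) hy.2.le
      linarith
    · have hy : 1 < y := hy
      rw [(hderiv y (by linarith)).deriv, ← hk]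
      have := monotoneOn_add_one_mul_log_sub_two_mul_sub_one (mem_Ioi.2 one_pos)
        (mem_Ioi.2 (by linarith)) hy.le
      linarith
  have : h 1 ≤ h x := hmin (mem_Ici.2 hx)
  simp only [h, klFun_one] at this
  linarith

lemma three_mul_sq_sub_le_mul_log_div {a b : ℝ} (ha : 0 ≤ a) (hb : 0 < b) :
    3 * (a - b) ^ 2 ≤ 2 * (a + 2 * b) * (a * log (a / b) + b - a) := by
  have hb' : b ≠ 0 := hb.ne'
  calc 3 * (a - b) ^ 2 = b ^ 2 * (3 * (a / b - 1) ^ 2) := by field_simp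
    _ ≤ b ^ 2 * (2 * (a / b + 2) * klFun (a / b)) :=
      mul_le_mul_of_nonneg_left (three_mul_sq_sub_one_le_klFun (div_nonneg ha hb.le)) (sq_nonneg b)
    _ = 2 * (a + 2 * b) * (a * log (a / b) + b - a) := by
      rw [klFun_apply]; field_simp

lemma two_mul_abs_le_mul_add_div {d u v t : ℝ} (hu : 0 ≤ u) (hv : 0 ≤ v) (ht : 0 < t)
    (h : d ^ 2 ≤ u * v) : 2 * |d| ≤ t * u + v / t := by
  have hsq : (t * (2 * |d|)) ^ 2 ≤ (t ^ 2 * u + v) ^ 2 := by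
    rw [mul_pow, mul_pow, sq_abs]
    nlinarith [mul_le_mul_of_nonneg_left h (sq_nonneg t), sq_nonneg (t ^ 2 * u - v)]
  have := le_of_pow_le_pow_left₀ two_ne_zero (by positivity) hsq
  rw [show t * u + v / t = (t ^ 2 * u + v) / t by field_simp, le_div_iff₀ ht]
  linarith

lemma le_sqrt_of_forall_two_mul_le_add_div {L c : ℝ} (h : ∀ t > 0, 2 * L ≤ t + c / t) :
    L ≤ √c := by
  rcases lt_or_ge 0 c with hc | hc
  · have := h (√c) (sqrt_pos.2 hc)
    rw [div_sqrt] at this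
    linarith
  · rw [sqrt_eq_zero_of_nonpos hc]
    by_contra! hL
    have := h L hL
    have : c / L ≤ 0 := div_nonpos_of_nonpos_of_nonneg hc hL.le
    linarith

theorem integral_abs_sub_le_sqrt_two_mul_integral_mul_log_div {α : Type*} [MeasurableSpace α]
    {μ : Measure α} {f g : α → ℝ} (hf0 : ∀ x, 0 ≤ f x) (hg0 : ∀ x, 0 ≤ g x)
    (hf : ∫ x, f x ∂μ = 1) (hg : ∫ x, g x ∂μ = 1) (hac : ∀ᵐ x ∂μ, g x = 0 → f x = 0)
    (hint : Integrable (fun x => f x * log (f x / g x)) μ) :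
    ∫ x, |f x - g x| ∂μ ≤ √(2 * ∫ x, f x * log (f x / g x) ∂μ) := by
  have hfi := integrable_of_integral_eq_one hf
  have hgi := integrable_of_integral_eq_one hg
  refine le_sqrt_of_forall_two_mul_le_add_div fun t ht => ?_
  have hpt : ∀ᵐ x ∂μ, 2 * |f x - g x|
      ≤ t * ((f x + 2 * g x) / 3) + 2 * (f x * log (f x / g x) + g x - f x) / t := by
    filter_upwards [hac] with x hx
    rcases (hg0 x).eq_or_lt with hgx | hgx
    · simp [← hgx, hx hgx.symm]
    have key := three_mul_sq_sub_le_mul_log_div (hf0 x) hgx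
    refine two_mul_abs_le_mul_add_div (by linarith [hf0 x, hg0 x]) (by nlinarith [hf0 x]) ht ?_
    linarith
  calc 2 * ∫ x, |f x - g x| ∂μ = ∫ x, 2 * |f x - g x| ∂μ := (integral_const_mul _ _).symm
    _ ≤ ∫ x, t * ((f x + 2 * g x) / 3) + 2 * (f x * log (f x / g x) + g x - f x) / t ∂μ :=
      integral_mono_ae (by fun_prop) (by fun_prop) hpt
    _ = t + (2 * ∫ x, f x * log (f x / g x) ∂μ) / t := by
      rw [integral_add (by fun_prop) (by fun_prop), integral_const_mul, integral_div,
        integral_div, integral_const_mul, integral_sub (by fun_prop) hfi,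
        integral_add hint hgi, integral_add hfi (by fun_prop), integral_const_mul, hf, hg]
      ring

lemma negPart_mul_log_div_le {a b : ℝ} (ha : 0 ≤ a) (hb : 0 ≤ b) :
    (a * log (a / b))⁻ ≤ (a - b)⁻ := by
  rcases ha.eq_or_lt with rfl | ha
  · simp
  rcases hb.eq_or_lt with rfl | hb
  · simp
  refine negPart_anti ?_
  have := one_sub_inv_le_log_of_pos (div_pos ha hb)
  rw [inv_div] at this
  calc a - b = a * (1 - b / a) := by field_simp
    _ ≤ a * log (a / b) := mul_le_mul_of_nonneg_left this ha.le

theorem integral_abs_log_ratio_le_general (f g : ℝ → ℝ) (hf0 : ∀ x, 0 ≤ f x) (hg0 : ∀ x, 0 ≤ g x)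
    (hfint : ∫ x, f x = 1) (hgint : ∫ x, g x = 1)
    (hac : ∀ᵐ x ∂(volume : Measure ℝ), g x = 0 → f x = 0)
    (hint : Integrable (fun x => f x * Real.log (f x / g x))) :
    ∫ x, f x * |Real.log (f x / g x)|
      ≤ (∫ x, f x * Real.log (f x / g x))
        + Real.sqrt (2 * ∫ x, f x * Real.log (f x / g x)) := by
  have hf := integrable_of_integral_eq_one hfint
  have hg := integrable_of_integral_eq_one hgint
  have hfg : Integrable (fun x => f x - g x) := hf.sub hg
  have hsub : ∫ x, (f x - g x) = 0 := by rw [integral_sub hf hg, hfint, hgint, sub_self]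
  have hneg : ∫ x, (f x * log (f x / g x))⁻ ≤ ∫ x, (f x - g x)⁻ :=
    integral_mono hint.neg_part hfg.neg_part fun x => negPart_mul_log_div_le (hf0 x) (hg0 x)
  calc ∫ x, f x * |log (f x / g x)| = ∫ x, |f x * log (f x / g x)| := by
        simp only [abs_mul, abs_of_nonneg (hf0 _)]
    _ = (2 * ∫ x, (f x * log (f x / g x))⁻) + ∫ x, f x * log (f x / g x) :=
        integral_abs_eq_two_mul_integral_negPart_add_integral hint
    _ ≤ (2 * ∫ x, (f x - g x)⁻) + ∫ x, f x * log (f x / g x) := by linarith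
    _ = (∫ x, f x * log (f x / g x)) + ∫ x, |f x - g x| := by
        rw [integral_abs_eq_two_mul_integral_negPart_add_integral hfg, hsub]; ring
    _ ≤ _ := by
        gcongr
        exact integral_abs_sub_le_sqrt_two_mul_integral_mul_log_div hf0 hg0 hfint hgint hac hint

/-- `∫ f |log(f/g)| ≤ D(f‖g) + √(2 D(f‖g))` for probability densities `f, g`. -/
theorem integral_abs_log_ratio_le (f g : ℝ → ℝ) (hf0 : ∀ x, 0 ≤ f x) (hg0 : ∀ x, 0 ≤ g x)
    (hfm : Measurable f) (hgm : Measurable g)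
    (hfint : ∫ x, f x = 1) (hgint : ∫ x, g x = 1)
    (hac : ∀ᵐ x ∂(volume : Measure ℝ), g x = 0 → f x = 0)
    (hint : Integrable (fun x => f x * Real.log (f x / g x))) :
    ∫ x, f x * |Real.log (f x / g x)|
      ≤ (∫ x, f x * Real.log (f x / g x))
        + Real.sqrt (2 * ∫ x, f x * Real.log (f x / g x)) :=
  integral_abs_log_ratio_le_general f g hf0 hg0 hfint hgint hac hint
end

section
/- Let f : ℝ → ℝ₊ be a log-concave integrable function with barycenter μ = (∫ x f dx)/(∫ f dx), and set μ₊ = max(μ,0). Then for every x ≥ x₀ ≥ 3(∫ f)/f(μ) + μ₊, one has f(x) ≤ f(x₀) · 2^{−(x−μ)/(x₀−μ) + 1}. -/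
/-
Log-concavity is used twice. First, `f` is quasi-concave, so if `f x₀ > f μ / 2` then
`f > f μ / 2` on `[μ, x₀]`, an interval of length at least `3 ∫ f / f μ`; this would force
`∫ f ≥ 3/2 ∫ f`. Hence `f x₀ ≤ f μ / 2`. Second, writing `x₀` as a convex combination of `μ` and
`x` shows that `log f` decays beyond `x₀` at least at the rate of its secant between `μ` and `x₀`,
i.e. by a factor `2` per length `x₀ - μ`.
-/

open MeasureTheory ProbabilityTheory Real
open scoped ENNReal NNReal Classical

/-- A nonnegative function is log-concave if `f(ax+by) ≥ f(x)^a f(y)^b` whenever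
`a, b ≥ 0` and `a + b = 1`. -/
def LogConcave (f : ℝ → ℝ) : Prop :=
  ∀ x y a b : ℝ, 0 ≤ a → 0 ≤ b → a + b = 1 → f x ^ a * f y ^ b ≤ f (a * x + b * y)

theorem mul_sub_le_integral_of_le_on_Icc {f : ℝ → ℝ} (hf0 : ∀ x, 0 ≤ f x)
    (hfi : Integrable f) {a b c : ℝ} (hab : a ≤ b) (hc : ∀ y ∈ Set.Icc a b, c ≤ f y) :
    c * (b - a) ≤ ∫ x, f x := by
  calc c * (b - a) = c * volume.real (Set.Icc a b) := by rw [volume_real_Icc_of_le hab]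
    _ ≤ ∫ x in Set.Icc a b, f x :=
        setIntegral_ge_of_const_le_real measurableSet_Icc (by simp) hc hfi.integrableOn
    _ ≤ ∫ x, f x := setIntegral_le_integral hfi (.of_forall hf0)

namespace LogConcave

variable {f : ℝ → ℝ}

theorem min_le_of_mem_Icc (hlc : LogConcave f) (hf0 : ∀ x, 0 ≤ f x) {a b y : ℝ}
    (hy : y ∈ Set.Icc a b) : min (f a) (f b) ≤ f y := by
  obtain ⟨hay, hyb⟩ := hy
  rcases hay.eq_or_lt with rfl | hay
  · exact min_le_left _ _
  set s := (y - a) / (b - a)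
  have hba : 0 < b - a := by linarith
  have hs0 : 0 ≤ s := div_nonneg (by linarith) hba.le
  have hs1 : s ≤ 1 := (div_le_one hba).mpr (by linarith)
  have hy : (1 - s) * a + s * b = y := by simp only [s]; field_simp; ring
  set c := min (f a) (f b)
  have hc : 0 ≤ c := le_min (hf0 a) (hf0 b)
  calc c = c ^ (1 - s) * c ^ s := by
        rw [← rpow_add' hc (by simp), sub_add_cancel, rpow_one]
    _ ≤ f a ^ (1 - s) * f b ^ s :=
        mul_le_mul (rpow_le_rpow hc (min_le_left _ _) (by linarith))
          (rpow_le_rpow hc (min_le_right _ _) hs0) (by positivity) (rpow_nonneg (hf0 a) _)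
    _ ≤ f y := hy ▸ hlc a b (1 - s) s (by linarith) hs0 (by ring)

theorem apply_lt_half_of_integral_lt (hlc : LogConcave f) (hf0 : ∀ x, 0 ≤ f x)
    (hfi : Integrable f) {a b : ℝ} (hab : a ≤ b) (h : 2 * ∫ x, f x < f a * (b - a)) :
    f b < f a / 2 := by
  by_contra! hb
  have hhalf : ∀ y ∈ Set.Icc a b, f a / 2 ≤ f y := fun y hy =>
    (le_min (by linarith [hf0 a]) hb).trans (hlc.min_le_of_mem_Icc hf0 hy)
  linarith [mul_sub_le_integral_of_le_on_Icc hf0 hfi hab hhalf]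

theorem apply_mul_rpow_le_rpow (hlc : LogConcave f) (hf0 : ∀ x, 0 ≤ f x) {a b x : ℝ}
    (hab : a < b) (hbx : b ≤ x) :
    f x * f a ^ ((x - a) / (b - a) - 1) ≤ f b ^ ((x - a) / (b - a)) := by
  set t := (x - a) / (b - a)
  have ht : 1 ≤ t := (one_le_div (by linarith)).mpr (by linarith)
  have hb : t⁻¹ * x + (1 - t⁻¹) * a = b := by
    have : x - a ≠ 0 := by linarith
    simp only [t]; field_simp; ring
  have hlc_b := hlc x a t⁻¹ (1 - t⁻¹) (by positivity)
    (sub_nonneg.mpr (inv_le_one_of_one_le₀ ht)) (by ring)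
  rw [hb] at hlc_b
  calc f x * f a ^ (t - 1) = (f x ^ t⁻¹ * f a ^ (1 - t⁻¹)) ^ t := by
        rw [mul_rpow (rpow_nonneg (hf0 x) _) (rpow_nonneg (hf0 a) _), ← rpow_mul (hf0 x),
          ← rpow_mul (hf0 a), inv_mul_cancel₀ (by positivity), rpow_one, sub_mul, one_mul,
          inv_mul_cancel₀ (by positivity)]
    _ ≤ f b ^ t := by
        gcongr
        exact mul_nonneg (rpow_nonneg (hf0 x) _) (rpow_nonneg (hf0 a) _)

theorem apply_le_mul_rpow_of_le_mul (hlc : LogConcave f) (hf0 : ∀ x, 0 ≤ f x) {a b x q : ℝ}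
    (hfa : 0 < f a) (hab : a < b) (hbx : b ≤ x) (hq : 0 ≤ q) (hqb : f b ≤ q * f a) :
    f x ≤ f b * q ^ ((x - a) / (b - a) - 1) := by
  set t := (x - a) / (b - a)
  have ht : 0 ≤ t - 1 := sub_nonneg.mpr ((one_le_div (by linarith)).mpr (by linarith))
  refine le_of_mul_le_mul_right ?_ (rpow_pos_of_pos hfa (t - 1))
  calc f x * f a ^ (t - 1) ≤ f b ^ t := hlc.apply_mul_rpow_le_rpow hf0 hab hbx
    _ = f b * f b ^ (t - 1) := by
        rw [← rpow_one_add' (hf0 b) (by linarith), add_sub_cancel]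
    _ ≤ f b * (q * f a) ^ (t - 1) :=
        mul_le_mul_of_nonneg_left (rpow_le_rpow (hf0 b) hqb ht) (hf0 b)
    _ = f b * q ^ (t - 1) * f a ^ (t - 1) := by rw [mul_rpow hq hfa.le]; ring

end LogConcave

theorem logConcave_tail_bound_general (f : ℝ → ℝ) (hf0 : ∀ x, 0 ≤ f x)
    (hfi : Integrable f) (hpos : 0 < ∫ x, f x)
    (hlc : LogConcave f)
    (μ : ℝ) (hfμ : 0 < f μ)
    (x x₀ : ℝ) (hx₀ : 3 * (∫ x, f x) / f μ + max μ 0 ≤ x₀) (hx : x₀ ≤ x) :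
    f x ≤ f x₀ * (2 : ℝ) ^ (-(x - μ) / (x₀ - μ) + 1) := by
  have hgap : 3 * (∫ x, f x) ≤ f μ * (x₀ - μ) := by
    rw [← div_le_iff₀' hfμ]
    linarith [le_max_left μ 0]
  have hμx₀ : μ < x₀ := sub_pos.mp (pos_of_mul_pos_right (by linarith) hfμ.le)
  have hhalf : f x₀ ≤ 2⁻¹ * f μ := by
    rw [← div_eq_inv_mul]
    exact (hlc.apply_lt_half_of_integral_lt hf0 hfi hμx₀.le (by linarith)).le
  calc f x ≤ f x₀ * 2⁻¹ ^ ((x - μ) / (x₀ - μ) - 1) :=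
        hlc.apply_le_mul_rpow_of_le_mul hf0 hfμ hμx₀ hx (by norm_num) hhalf
    _ = f x₀ * (2 : ℝ) ^ (-(x - μ) / (x₀ - μ) + 1) := by
        rw [inv_rpow zero_le_two, ← rpow_neg zero_le_two, neg_sub, neg_div, sub_eq_neg_add]

/-- Tail bound for a log-concave integrable function:
`f(x) ≤ f(x₀) 2^{-(x-μ)/(x₀-μ)+1}` for `x ≥ x₀ ≥ 3∫f/f(μ) + μ₊`. -/
theorem logConcave_tail_bound (f : ℝ → ℝ) (hf0 : ∀ x, 0 ≤ f x)
    (hfi : Integrable f) (hpos : 0 < ∫ x, f x)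
    (hxf : Integrable (fun x => x * f x)) (hlc : LogConcave f)
    (μ : ℝ) (hμ : μ = (∫ x, x * f x) / ∫ x, f x) (hfμ : 0 < f μ)
    (x x₀ : ℝ) (hx₀ : 3 * (∫ x, f x) / f μ + max μ 0 ≤ x₀) (hx : x₀ ≤ x) :
    f x ≤ f x₀ * (2 : ℝ) ^ (-(x - μ) / (x₀ - μ) + 1) :=
  logConcave_tail_bound_general f hf0 hfi hpos hlc μ hfμ x x₀ hx₀ hx
end
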